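/- With the notation of the setup, define G(y) = y · ∇v(y) and H(y) = y · D²v(y) · y (D²v the Hessian matrix of v). Then for all t ∈ ℝ, y ∈ ℝ^{n−1}, z > 0, the function W(t,y,z) = e^{iλt z^{−β}} v(y z^{−β/2}) satisfies i∂ₜW − Δ_x W + z^{−2β}(Σ_{i,j} a_{ij} y_i y_j) W = F(t,y,z), where e^{−iλt z^{−β}} F(t,y,z) = z^{−2} [ v(y z^{−β/2}) ( −β(β+1) i λ t z^{−β} + β² λ² t² z^{−2β} ) − G(y z^{−β/2}) ( β² i λ t z^{−β} + β(β+2)/4 ) − (β²/4) H(y z^{−β/2}) ]. -/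

import Mathlib

open MeasureTheory ENNReal Filter

noncomputable section

/-- The quadratic form `Σᵢⱼ aᵢⱼ yᵢ yⱼ`. -/
def quadForm {k : ℕ} (a : Matrix (Fin k) (Fin k) ℝ) (y : Fin k → ℝ) : ℝ :=
  ∑ i, ∑ j, a i j * y i * y j

/-- The Laplacian of a real-valued function on `ℝ^k` (sum of second partial derivatives). -/
def lapR {k : ℕ} (f : (Fin k → ℝ) → ℝ) (y : Fin k → ℝ) : ℝ :=
  ∑ i, iteratedDeriv 2 (fun s => f (Function.update y i s)) (y i)

/-- The spatial Laplacian `Δ_x = Δ_y + ∂_z²` of a complex-valued function on `ℝ^k × ℝ`. -/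
def lapX {k : ℕ} (f : ((Fin k → ℝ) × ℝ) → ℂ) (x : (Fin k → ℝ) × ℝ) : ℂ :=
  (∑ i, iteratedDeriv 2 (fun s => f (Function.update x.1 i s, x.2)) (x.1 i))
    + iteratedDeriv 2 (fun s => f (x.1, s)) x.2

/-- The mixed norm `‖F‖_{L^p((0,T);L^q(ℝⁿ))}`. -/
def mixedNorm {k : ℕ} (p q T : ℝ) (F : ℝ → ((Fin k → ℝ) × ℝ) → ℂ) : ℝ≥0∞ :=
  (∫⁻ t in Set.Ioc (0:ℝ) T, (eLpNorm (F t) (ENNReal.ofReal q) volume) ^ p) ^ (1/p)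

/-- The mixed norm `‖F‖_{L^p((0,T);L^q(ℝⁿ))}` for real-valued `F`. -/
def mixedNormR {k : ℕ} (p q T : ℝ) (F : ℝ → ((Fin k → ℝ) × ℝ) → ℝ) : ℝ≥0∞ :=
  (∫⁻ t in Set.Ioc (0:ℝ) T, (eLpNorm (F t) (ENNReal.ofReal q) volume) ^ p) ^ (1/p)

/-- `w(y,z) = v(y · z^{-β/2})` for `z > 0`, extended by `0` for `z ≤ 0`. -/
def wfun {k : ℕ} (β : ℝ) (v : (Fin k → ℝ) → ℝ) (x : (Fin k → ℝ) × ℝ) : ℝ :=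
  if 0 < x.2 then v ((x.2 ^ (-(β/2))) • x.1) else 0

/-- `W(t,y,z) = e^{iλt z^{-β}} v(y · z^{-β/2})` for `z > 0`, extended by `0` for `z ≤ 0`. -/
def Wfun {k : ℕ} (β lam : ℝ) (v : (Fin k → ℝ) → ℝ) (t : ℝ) (x : (Fin k → ℝ) × ℝ) : ℂ :=
  if 0 < x.2 then
    Complex.exp (Complex.I * ((lam * t * x.2 ^ (-β) : ℝ) : ℂ)) *
      ((v ((x.2 ^ (-(β/2))) • x.1) : ℝ) : ℂ)
  else 0

/-- The cutoff `φ_R(z) · ψ(y,z) = φ((z-R)/R^γ) · φ(|y|²/z²)`. -/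
def cutoff {k : ℕ} (φ : ℝ → ℝ) (γ R : ℝ) (x : (Fin k → ℝ) × ℝ) : ℝ :=
  φ ((x.2 - R) / R ^ γ) * φ ((∑ i, (x.1 i) ^ 2) / x.2 ^ 2)

/-- `f_R = w · φ_R · ψ`. -/
def fR {k : ℕ} (β : ℝ) (v : (Fin k → ℝ) → ℝ) (φ : ℝ → ℝ) (γ R : ℝ)
    (x : (Fin k → ℝ) × ℝ) : ℝ :=
  wfun β v x * cutoff φ γ R x

/-- `W_R = W · φ_R · ψ`. -/
def WR {k : ℕ} (β lam : ℝ) (v : (Fin k → ℝ) → ℝ) (φ : ℝ → ℝ) (γ R : ℝ) (t : ℝ)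
    (x : (Fin k → ℝ) × ℝ) : ℂ :=
  Wfun β lam v t x * ((cutoff φ γ R x : ℝ) : ℂ)

/-- `F_R := i ∂ₜ W_R - Δ_x W_R + z^{-2β} (Σᵢⱼ aᵢⱼ yᵢ yⱼ) W_R`. -/
def FR {k : ℕ} (a : Matrix (Fin k) (Fin k) ℝ) (β lam : ℝ) (v : (Fin k → ℝ) → ℝ)
    (φ : ℝ → ℝ) (γ R : ℝ) (t : ℝ) (x : (Fin k → ℝ) × ℝ) : ℂ :=
  Complex.I * deriv (fun s => WR β lam v φ γ R s x) t - lapX (WR β lam v φ γ R t) x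
    + ((x.2 ^ (-(2*β)) * quadForm a x.1 : ℝ) : ℂ) * WR β lam v φ γ R t x

/-- The explicit forcing term `F` such that
`i ∂ₜ W - Δ_x W + z^{-2β} (Σ aᵢⱼ yᵢ yⱼ) W = F`. -/
def Ffun {k : ℕ} (β lam : ℝ) (v : (Fin k → ℝ) → ℝ) (t : ℝ) (x : (Fin k → ℝ) × ℝ) : ℂ :=
  Complex.exp (Complex.I * ((lam * t * x.2 ^ (-β) : ℝ) : ℂ)) *
    (((x.2 ^ (-(2:ℝ)) : ℝ) : ℂ) *
      (((v ((x.2 ^ (-(β/2))) • x.1) : ℝ) : ℂ) *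
          (-((β*(β+1) : ℝ) : ℂ) * Complex.I * ((lam * t * x.2 ^ (-β) : ℝ) : ℂ)
            + ((β^2 * lam^2 * t^2 * x.2 ^ (-(2*β)) : ℝ) : ℂ))
        - ((fderiv ℝ v ((x.2 ^ (-(β/2))) • x.1) ((x.2 ^ (-(β/2))) • x.1) : ℝ) : ℂ) *
          (((β^2 : ℝ) : ℂ) * Complex.I * ((lam * t * x.2 ^ (-β) : ℝ) : ℂ)
            + ((β*(β+2)/4 : ℝ) : ℂ))
        - ((β^2/4 : ℝ) : ℂ) *
          ((iteratedFDeriv ℝ 2 v ((x.2 ^ (-(β/2))) • x.1)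
              ![(x.2 ^ (-(β/2))) • x.1, (x.2 ^ (-(β/2))) • x.1] : ℝ) : ℂ)))



section AuxLemmas

variable {k : ℕ}

lemma quadForm_smul (a : Matrix (Fin k) (Fin k) ℝ) (c : ℝ) (y : Fin k → ℝ) :
    quadForm a (c • y) = c ^ 2 * quadForm a y := by
  unfold quadForm
  rw [Finset.mul_sum]
  refine Finset.sum_congr rfl fun i _ => ?_
  rw [Finset.mul_sum]
  refine Finset.sum_congr rfl fun j _ => ?_
  simp only [Pi.smul_apply, smul_eq_mul]
  ring

lemma iteratedDeriv_two'' {F : Type*} [NormedAddCommGroup F] [NormedSpace ℝ F] (f : ℝ → F) :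
    iteratedDeriv 2 f = deriv (deriv f) := by
  have h : (2:ℕ) = 1 + 1 := rfl
  rw [h, iteratedDeriv_succ, iteratedDeriv_one]

/-- commute `E * ofReal ∘ g` with second derivative -/
lemma iter2_const_mul_ofReal (g : ℝ → ℝ) (hg1 : Differentiable ℝ g)
    (hg2 : Differentiable ℝ (deriv g)) (E : ℂ) (x : ℝ) :
    iteratedDeriv 2 (fun u => E * ((g u : ℝ) : ℂ)) x = E * ((iteratedDeriv 2 g x : ℝ) : ℂ) := by
  have key : ∀ (f : ℝ → ℝ), Differentiable ℝ f →
      deriv (fun u => E * ((f u : ℝ) : ℂ)) = fun u => E * ((deriv f u : ℝ) : ℂ) := by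
    intro f hf
    funext u
    exact (((hf u).hasDerivAt.ofReal_comp).const_mul E).deriv
  rw [iteratedDeriv_two'', iteratedDeriv_two'', key g hg1, key (deriv g) hg2]

lemma hasDerivAt_q (β : ℝ) (y : Fin k → ℝ) {z : ℝ} (hz : 0 < z) :
    HasDerivAt (fun s : ℝ => (s ^ (-(β/2))) • y) ((-(β/2) * z ^ (-(β/2) - 1)) • y) z :=
  (Real.hasDerivAt_rpow_const (Or.inl hz.ne')).smul_const y

lemma hasDerivAt_V (β : ℝ) (v : (Fin k → ℝ) → ℝ) (hv : Differentiable ℝ v)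
    (y : Fin k → ℝ) {z : ℝ} (hz : 0 < z) :
    HasDerivAt (fun s : ℝ => v ((s ^ (-(β/2))) • y))
      (-(β/2) * z ^ (-(β/2) - 1) * fderiv ℝ v ((z ^ (-(β/2))) • y) y) z := by
  have h := (hv ((z ^ (-(β/2))) • y)).hasFDerivAt.comp_hasDerivAt z (hasDerivAt_q β y hz)
  simpa [Function.comp_def, _root_.map_smul, smul_eq_mul] using h

lemma hasDerivAt_G (β : ℝ) (v : (Fin k → ℝ) → ℝ) (hv : Differentiable ℝ (fderiv ℝ v))
    (y : Fin k → ℝ) {z : ℝ} (hz : 0 < z) :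
    HasDerivAt (fun s : ℝ => fderiv ℝ v ((s ^ (-(β/2))) • y) y)
      (-(β/2) * z ^ (-(β/2) - 1) * fderiv ℝ (fderiv ℝ v) ((z ^ (-(β/2))) • y) y y) z := by
  have h1 := (hv ((z ^ (-(β/2))) • y)).hasFDerivAt.comp_hasDerivAt z (hasDerivAt_q β y hz)
  have h2 := h1.clm_apply (hasDerivAt_const z y)
  simpa [Function.comp, _root_.map_smul, smul_eq_mul] using h2

lemma hasDerivAt_E (β lam t : ℝ) {z : ℝ} (hz : 0 < z) :
    HasDerivAt (fun s : ℝ => Complex.exp (Complex.I * ((lam * t * s ^ (-β) : ℝ) : ℂ)))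
      (Complex.exp (Complex.I * ((lam * t * z ^ (-β) : ℝ) : ℂ)) *
        (Complex.I * ((lam * t * (-β * z ^ (-β - 1)) : ℝ) : ℂ))) z := by
  have h0 : HasDerivAt (fun s : ℝ => lam * t * s ^ (-β)) (lam * t * (-β * z ^ (-β - 1))) z := by
    simpa [mul_assoc] using (Real.hasDerivAt_rpow_const (p := -β) (Or.inl hz.ne')).const_mul (lam * t)
  exact (h0.ofReal_comp.const_mul Complex.I).cexp

lemma hasDerivAt_W (β lam t : ℝ) (v : (Fin k → ℝ) → ℝ) (hv : Differentiable ℝ v)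
    (y : Fin k → ℝ) {z : ℝ} (hz : 0 < z) :
    HasDerivAt (fun s : ℝ => Complex.exp (Complex.I * ((lam * t * s ^ (-β) : ℝ) : ℂ)) *
        ((v ((s ^ (-(β/2))) • y) : ℝ) : ℂ))
      (Complex.exp (Complex.I * ((lam * t * z ^ (-β) : ℝ) : ℂ)) *
        (Complex.I * ((lam * t * (-β * z ^ (-β - 1)) : ℝ) : ℂ) * ((v ((z ^ (-(β/2))) • y) : ℝ) : ℂ)
          + ((-(β/2) * z ^ (-(β/2) - 1) * fderiv ℝ v ((z ^ (-(β/2))) • y) y : ℝ) : ℂ))) z := by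
  have h := (hasDerivAt_E β lam t hz).mul (hasDerivAt_V β v hv y hz).ofReal_comp
  refine h.congr_deriv ?_
  push_cast
  ring

lemma zderiv2 (β lam : ℝ) (v : (Fin k → ℝ) → ℝ) (hv1 : Differentiable ℝ v)
    (hv2 : Differentiable ℝ (fderiv ℝ v)) (t : ℝ) (y : Fin k → ℝ) {z : ℝ} (hz : 0 < z) :
    iteratedDeriv 2 (fun s => Wfun β lam v t (y, s)) z =
      Complex.exp (Complex.I * ((lam * t * z ^ (-β) : ℝ) : ℂ)) *
        ( Complex.I * ((lam * t * (-β * z ^ (-β-1)) : ℝ) : ℂ)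
            * (Complex.I * ((lam * t * (-β * z ^ (-β-1)) : ℝ) : ℂ) * ((v ((z ^ (-(β/2))) • y) : ℝ) : ℂ)
              + ((-(β/2) * z ^ (-(β/2)-1) * fderiv ℝ v ((z ^ (-(β/2))) • y) y : ℝ) : ℂ))
        + (Complex.I * ((lam * t * (-β * ((-β-1) * z ^ (-β-2))) : ℝ) : ℂ) * ((v ((z ^ (-(β/2))) • y) : ℝ) : ℂ)
            + Complex.I * ((lam * t * (-β * z ^ (-β-1)) : ℝ) : ℂ)
                * ((-(β/2) * z ^ (-(β/2)-1) * fderiv ℝ v ((z ^ (-(β/2))) • y) y : ℝ) : ℂ)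
            + ((-(β/2) * ((-(β/2)-1) * z ^ (-(β/2)-2)) * fderiv ℝ v ((z ^ (-(β/2))) • y) y
                + -(β/2) * z ^ (-(β/2)-1)
                  * (-(β/2) * z ^ (-(β/2)-1) * fderiv ℝ (fderiv ℝ v) ((z ^ (-(β/2))) • y) y y) : ℝ) : ℂ))) := by
  set h : ℝ → ℂ := fun s => Complex.exp (Complex.I * ((lam * t * s ^ (-β) : ℝ) : ℂ)) *
      ((v ((s ^ (-(β/2))) • y) : ℝ) : ℂ) with hh_def
  set h₁ : ℝ → ℂ := fun s => Complex.exp (Complex.I * ((lam * t * s ^ (-β) : ℝ) : ℂ)) *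
      (Complex.I * ((lam * t * (-β * s ^ (-β - 1)) : ℝ) : ℂ) * ((v ((s ^ (-(β/2))) • y) : ℝ) : ℂ)
        + ((-(β/2) * s ^ (-(β/2) - 1) * fderiv ℝ v ((s ^ (-(β/2))) • y) y : ℝ) : ℂ)) with hh1_def
  have hev : (fun s => Wfun β lam v t (y, s)) =ᶠ[nhds z] h :=
    (eventually_gt_nhds hz).mono fun s hs => by simp [Wfun, if_pos hs, hh_def]
  have e1 : deriv (fun s => Wfun β lam v t (y, s)) =ᶠ[nhds z] deriv h := hev.deriv
  have e2 : deriv h =ᶠ[nhds z] h₁ :=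
    (eventually_gt_nhds hz).mono fun s hs => (hasDerivAt_W β lam t v hv1 y hs).deriv
  rw [iteratedDeriv_two'']
  rw [(e1.trans e2).deriv_eq]
  have a1 : HasDerivAt (fun s : ℝ => lam * t * (-β * s ^ (-β-1)))
      (lam * t * (-β * ((-β-1) * z ^ (-β-2)))) z := by
    have := ((Real.hasDerivAt_rpow_const (p := -β-1) (Or.inl hz.ne')).const_mul (-β)).const_mul (lam * t)
    simpa [show -β-1-1 = -β-2 by ring, mul_assoc] using this
  have b1 : HasDerivAt (fun s : ℝ => -(β/2) * s ^ (-(β/2)-1))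
      (-(β/2) * ((-(β/2)-1) * z ^ (-(β/2)-2))) z := by
    have := (Real.hasDerivAt_rpow_const (p := -(β/2)-1) (Or.inl hz.ne')).const_mul (-(β/2))
    simpa [show -(β/2)-1-1 = -(β/2)-2 by ring] using this
  have a2 := b1.mul (hasDerivAt_G β v hv2 y hz)
  have hPhi := ((a1.ofReal_comp.const_mul Complex.I).mul (hasDerivAt_V β v hv1 y hz).ofReal_comp).add
      a2.ofReal_comp
  have hfull := (hasDerivAt_E β lam t hz).mul hPhi
  have hfull2 : HasDerivAt h₁ _ z := hfull
  rw [hfull2.deriv]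
  simp only [Pi.mul_apply, Pi.add_apply]
  push_cast
  ring

end AuxLemmas

/-- With `G(y) = y·∇v(y)` and `H(y) = y·D²v(y)·y`, the function
`W(t,y,z) = e^{iλt z^{-β}} v(y z^{-β/2})` satisfies
`i∂ₜW - Δ_x W + z^{-2β}(Σᵢⱼ aᵢⱼ yᵢyⱼ) W = F(t,y,z)` for all `t`, `y`, `z > 0`, with
`e^{-iλt z^{-β}} F = z^{-2}[ v(yz^{-β/2})(-β(β+1)iλt z^{-β} + β²λ²t² z^{-2β})`
`- G(yz^{-β/2})(β² iλt z^{-β} + β(β+2)/4) - (β²/4) H(yz^{-β/2}) ]`. -/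
theorem statement3
    (n : ℕ) (hn : 2 ≤ n) (σ β : ℝ) (hσ0 : 0 ≤ σ) (hσ2 : σ < 2) (hβ : β = 1 + σ/2)
    (a : Matrix (Fin (n-1)) (Fin (n-1)) ℝ) (ha : a.PosDef)
    (lam : ℝ) (v : (Fin (n-1) → ℝ) → ℝ) (hv : ContDiff ℝ (⊤ : ℕ∞) v) (hv0 : v ≠ 0)
    (heig : ∀ y, -lapR v y + quadForm a y * v y = lam * v y)
    (hvLp : ∀ (k : ℕ) (r : ℝ), 1 ≤ r →
      MemLp (fun y => ‖iteratedFDeriv ℝ k v y‖) (ENNReal.ofReal r) volume) :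
    ∀ (t : ℝ) (y : Fin (n-1) → ℝ) (z : ℝ), 0 < z →
      Complex.I * deriv (fun s => Wfun β lam v s (y, z)) t
          - lapX (fun x => Wfun β lam v t x) (y, z)
          + ((z ^ (-(2*β)) * quadForm a y : ℝ) : ℂ) * Wfun β lam v t (y, z)
        = Ffun β lam v t (y, z) := by
  intro t y z hz
  have h1le : (1 : WithTop ℕ∞) ≤ ((⊤:ℕ∞) : WithTop ℕ∞) := by exact_mod_cast (le_top : (1:ℕ∞) ≤ ⊤)
  have hd1 : Differentiable ℝ v := hv.differentiable (by simp)
  have hd2 : Differentiable ℝ (fderiv ℝ v) := (hv.fderiv_right (m := 1) (WithTop.coe_le_coe.mpr le_top)).differentiable one_ne_zero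
  set c : ℝ := z ^ (-(β/2)) with hc_def
  set p : Fin (n-1) → ℝ := c • y with hp_def
  -- time derivative
  have hDt : deriv (fun s => Wfun β lam v s (y, z)) t =
      Complex.exp (Complex.I * ((lam * t * z ^ (-β) : ℝ) : ℂ)) *
        (Complex.I * ((lam * z ^ (-β) : ℝ) : ℂ)) * ((v p : ℝ) : ℂ) := by
    have funeq : (fun s => Wfun β lam v s (y, z)) =
        fun s => Complex.exp (Complex.I * ((lam * s * z ^ (-β) : ℝ) : ℂ)) * ((v p : ℝ) : ℂ) := by
      funext s
      simp only [Wfun, hp_def, hc_def]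
      rw [if_pos hz]
    rw [funeq]
    have h0 : HasDerivAt (fun s : ℝ => lam * s * z ^ (-β)) (lam * z ^ (-β)) t := by
      simpa using ((hasDerivAt_id t).const_mul lam).mul_const (z ^ (-β))
    exact (((h0.ofReal_comp.const_mul Complex.I).cexp).mul_const _).deriv
  -- y-Laplacian
  have key : ∀ i, iteratedDeriv 2 (fun s => Wfun β lam v t (Function.update y i s, z)) (y i) =
      Complex.exp (Complex.I * ((lam * t * z ^ (-β) : ℝ) : ℂ)) *
        ((c * c * iteratedDeriv 2 (fun u => v (Function.update p i u)) (p i) : ℝ) : ℂ) := by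
    intro i
    set E : ℂ := Complex.exp (Complex.I * ((lam * t * z ^ (-β) : ℝ) : ℂ)) with hE_def
    have hfe : (fun s => Wfun β lam v t (Function.update y i s, z)) =
        fun s => (fun u => E * ((v (Function.update p i u) : ℝ) : ℂ)) (c * s) := by
      funext s
      simp only [Wfun, hE_def, hp_def, hc_def]
      rw [if_pos hz]
      rw [show (z ^ (-(β/2)) : ℝ) * s = z ^ (-(β/2)) • s from rfl, Function.update_smul]
    have hgC : ContDiff ℝ ((⊤:ℕ∞) : WithTop ℕ∞) (fun u => v (Function.update p i u)) :=
      (hv.of_le (by simp)).comp (contDiff_update _ p i)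
    have hg1 : Differentiable ℝ (fun u => v (Function.update p i u)) := hgC.differentiable (by simp)
    have hg2 : Differentiable ℝ (deriv (fun u => v (Function.update p i u))) :=
      (contDiff_infty_iff_deriv.mp hgC).2.differentiable (by simp)
    have hf2 : ContDiff ℝ (2:ℕ) (fun u => E * ((v (Function.update p i u) : ℝ) : ℂ)) :=
      contDiff_const.mul (Complex.ofRealCLM.contDiff.comp ((hv.of_le (WithTop.coe_le_coe.mpr le_top)).comp (contDiff_update _ p i)))
    rw [hfe, iteratedDeriv_comp_const_smul hf2 c]
    show c ^ 2 • iteratedDeriv 2 (fun u => E * ((v (Function.update p i u) : ℝ) : ℂ)) (c * y i) = _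
    rw [iter2_const_mul_ofReal _ hg1 hg2 E (c * y i)]
    have hpi : c * y i = p i := rfl
    rw [hpi, Complex.real_smul]
    push_cast
    ring
  have hSy : (∑ i, iteratedDeriv 2 (fun s => Wfun β lam v t (Function.update y i s, z)) (y i)) =
      Complex.exp (Complex.I * ((lam * t * z ^ (-β) : ℝ) : ℂ)) *
        ((c * c * lapR v p : ℝ) : ℂ) := by
    simp only [key]
    unfold lapR
    push_cast [Finset.mul_sum]
    try exact Finset.sum_congr rfl fun i _ => by ring
    try ring
  have hlap : lapR v p = quadForm a p * v p - lam * v p := by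
    have := heig p
    linarith
  have hqf : quadForm a p = c ^ 2 * quadForm a y := quadForm_smul a c y
  -- convert the Hessian/gradient terms in Ffun
  have hfd : fderiv ℝ v p (c • y) = c * fderiv ℝ v p y := by
    rw [_root_.map_smul, smul_eq_mul]
  have hifd : (iteratedFDeriv ℝ 2 v p ![c • y, c • y] : ℝ) =
      c * (c * fderiv ℝ (fderiv ℝ v) p y y) := by
    rw [iteratedFDeriv_two_apply]
    simp only [Matrix.cons_val_zero, Matrix.cons_val_one, Matrix.head_cons, _root_.map_smul,
      ContinuousLinearMap.smul_apply, smul_eq_mul]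
  -- rpow relations
  have R1 : z ^ (-β - 1) = z ^ (-β) * z⁻¹ := by
    rw [show -β - 1 = -β + (-1) by ring, Real.rpow_add hz, Real.rpow_neg_one]
  have R2 : z ^ (-β - 2) = z ^ (-β) * z⁻¹ * z⁻¹ := by
    rw [show -β - 2 = -β + (-1) + (-1) by ring, Real.rpow_add hz, Real.rpow_add hz,
      Real.rpow_neg_one]
  have R3 : z ^ (-(β/2) - 1) = c * z⁻¹ := by
    rw [show -(β/2) - 1 = -(β/2) + (-1) by ring, Real.rpow_add hz, Real.rpow_neg_one, hc_def]
  have R4 : z ^ (-(β/2) - 2) = c * z⁻¹ * z⁻¹ := by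
    rw [show -(β/2) - 2 = -(β/2) + (-1) + (-1) by ring, Real.rpow_add hz, Real.rpow_add hz,
      Real.rpow_neg_one, hc_def]
  have R5 : z ^ (-(2*β)) = z ^ (-β) * z ^ (-β) := by
    rw [show -(2*β) = -β + -β by ring, Real.rpow_add hz]
  have R6 : z ^ (-(2:ℝ)) = z⁻¹ * z⁻¹ := by
    rw [show -(2:ℝ) = -1 + -1 by ring, Real.rpow_add hz, Real.rpow_neg_one]
  have R7 : z ^ (-β) = c * c := by
    rw [show -β = -(β/2) + -(β/2) by ring, Real.rpow_add hz, hc_def]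
  -- assemble
  simp only [lapX]
  rw [hDt, hSy, zderiv2 β lam v hd1 hd2 t y hz, hlap, hqf]
  simp only [Ffun, Wfun]
  rw [if_pos hz]
  rw [← hc_def, ← hp_def, hfd, hifd]
  rw [R1, R2, R3, R4, R5, R6, R7]
  push_cast
  ring_nf
  simp only [Complex.I_sq]
  ring


end
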